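/- With S, T' and A as in the setup, assume additionally that every row of S contains at least one zero entry and that q ≥ 1. Then r₊(A) = r₊(S) + r₊(T') + 1. -/
import Mathlib

/-- The nonnegative rank of a matrix `M` with nonnegative real entries: the smallest `r`
such that `M` is a sum of `r` nonnegative matrices each of rank at most one. -/
noncomputable def nnegRank {α β : Type*} [Fintype α] [Fintype β] (M : Matrix α β ℝ) : ℕ :=
  sInf { r : ℕ | ∃ R : Fin r → Matrix α β ℝ,
      (∀ ℓ i j, 0 ≤ R ℓ i j) ∧ (∀ ℓ, (R ℓ).rank ≤ 1) ∧ M = ∑ ℓ, R ℓ }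

/-- The `(m+p+1) × (n·(q+1))` matrix `A` of the setup, built from an `m × n` matrix `S` and a
`p × q` matrix `T'`: its column indexed by `(j, s)` is `(S_j ; t'_s ; 0)` for `s ≤ q`
(0-indexed: `s < q`) and `(S_j ; 0 ; 1)` for `s = q+1` (0-indexed: `s = q`). -/
def buildA {m n p q : ℕ} (S : Matrix (Fin m) (Fin n) ℝ) (T' : Matrix (Fin p) (Fin q) ℝ) :
    Matrix (Fin (m + p + 1)) (Fin n × Fin (q + 1)) ℝ :=
  fun i js =>
    if h1 : (i : ℕ) < m then S ⟨i, h1⟩ js.1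
    else if h2 : (i : ℕ) < m + p then
      (if h3 : (js.2 : ℕ) < q then T' ⟨(i : ℕ) - m, by omega⟩ ⟨js.2, h3⟩ else 0)
    else (if (js.2 : ℕ) < q then 0 else 1)

section Core
variable {α β : Type*} [Fintype α] [Fintype β]

/-- A matrix of the form `u i * v j` has rank at most one. -/
lemma outer_rank_le_one (u : α → ℝ) (v : β → ℝ) :
    (Matrix.of fun i j => u i * v j).rank ≤ 1 := by
  classical
  have hsub : LinearMap.range (Matrix.of fun i j => u i * v j).mulVecLin ≤
      Submodule.span ℝ {u} := by
    rintro x ⟨y, rfl⟩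
    have hx : (Matrix.of fun i j => u i * v j).mulVecLin y = (∑ j, v j * y j) • u := by
      ext i
      simp only [Matrix.mulVecLin_apply, Matrix.mulVec, dotProduct, Matrix.of_apply,
        Pi.smul_apply, smul_eq_mul, Finset.sum_mul]
      exact Finset.sum_congr rfl fun j _ => by ring
    rw [hx]
    exact Submodule.smul_mem _ _ (Submodule.mem_span_singleton_self u)
  have h1 : Module.finrank ℝ (Submodule.span ℝ ({u} : Set (α → ℝ))) ≤ 1 := by
    by_cases hu : u = 0
    · rw [hu, Submodule.span_zero_singleton]; simp
    · rw [finrank_span_singleton hu]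
  calc (Matrix.of fun i j => u i * v j).rank
      ≤ Module.finrank ℝ (Submodule.span ℝ ({u} : Set (α → ℝ))) :=
        Submodule.finrank_mono hsub
    _ ≤ 1 := h1

/-- 2×2 minors of a matrix of rank at most one vanish. -/
lemma minor_eq_of_rank_le_one {R : Matrix α β ℝ} (h1 : R.rank ≤ 1) :
    ∀ i i' j j', R i j * R i' j' = R i j' * R i' j := by
  classical
  intro i i' j j'
  set W := LinearMap.range R.mulVecLin with hW
  have hcol : ∀ j₀ : β, (fun a => R a j₀) ∈ W := by
    intro j₀
    exact ⟨Pi.single j₀ 1, by ext a; simp [Matrix.mulVecLin_apply]⟩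
  have hfin : Module.finrank ℝ W ≤ 1 := h1
  set f : α → ℝ := fun a => R a j with hf
  set g : α → ℝ := fun a => R a j' with hg
  have hfW : f ∈ W := hcol j
  have hgW : g ∈ W := hcol j'
  have key : ∀ a b, f a * g b = g a * f b := by
    by_cases hg0 : g = 0
    · intro a b; simp [hg0]
    by_cases hdep : ∃ c : ℝ, c • g = f
    · obtain ⟨c, hc⟩ := hdep
      intro a b
      have ha := congrFun hc a
      have hb := congrFun hc b
      simp only [Pi.smul_apply, smul_eq_mul] at ha hb
      rw [← ha, ← hb]; ring
    · exfalso
      have hli : LinearIndependent ℝ ![f, g] := by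
        rw [linearIndependent_fin2]
        refine ⟨hg0, fun a h => hdep ⟨a, ?_⟩⟩
        simpa using h
      have hspan : Submodule.span ℝ (Set.range ![f, g]) ≤ W := by
        rw [Submodule.span_le]
        rintro x ⟨k, rfl⟩
        fin_cases k
        · exact hfW
        · exact hgW
      have h2 : Module.finrank ℝ (Submodule.span ℝ (Set.range ![f, g])) = 2 := by
        rw [finrank_span_eq_card hli]; simp
      have := Submodule.finrank_mono hspan
      omega
  have := key i i'
  simp only [hf, hg] at this
  linarith [this]

/-- A nonnegative matrix of rank at most one is an outer product of nonnegative vectors. -/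
lemma exists_outer {R : Matrix α β ℝ} (h0 : ∀ i j, 0 ≤ R i j) (h1 : R.rank ≤ 1) :
    ∃ u : α → ℝ, ∃ v : β → ℝ, (∀ i, 0 ≤ u i) ∧ (∀ j, 0 ≤ v j) ∧
      ∀ i j, R i j = u i * v j := by
  classical
  by_cases hR : ∀ i j, R i j = 0
  · exact ⟨0, 0, fun _ => le_rfl, fun _ => le_rfl, fun i j => by simp [hR i j]⟩
  push_neg at hR
  obtain ⟨i0, j0, hij⟩ := hR
  have hpos : 0 < R i0 j0 := lt_of_le_of_ne (h0 i0 j0) (Ne.symm hij)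
  refine ⟨fun i => R i j0 / R i0 j0, fun j => R i0 j,
    fun i => div_nonneg (h0 i j0) hpos.le, fun j => h0 i0 j, fun i j => ?_⟩
  have := minor_eq_of_rank_le_one h1 i i0 j j0
  field_simp
  linarith [this]

lemma nnegRank_le_card {ι : Type*} {M : Matrix α β ℝ} (t : Finset ι)
    (R : ι → Matrix α β ℝ) (h0 : ∀ ℓ ∈ t, ∀ i j, 0 ≤ R ℓ i j)
    (h1 : ∀ ℓ ∈ t, (R ℓ).rank ≤ 1) (hM : M = ∑ ℓ ∈ t, R ℓ) :
    nnegRank M ≤ t.card := by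
  classical
  apply Nat.sInf_le
  refine ⟨fun k => R ((t.equivFin.symm k) : ι), ?_, ?_, ?_⟩
  · exact fun k i j => h0 _ (t.equivFin.symm k).2 i j
  · exact fun k => h1 _ (t.equivFin.symm k).2
  · rw [hM, ← Finset.sum_coe_sort t R]
    exact (Equiv.sum_comp t.equivFin.symm (fun x : t => R x)).symm

lemma nnegRank_set_nonempty (M : Matrix α β ℝ) (h0 : ∀ i j, 0 ≤ M i j) :
    { r : ℕ | ∃ R : Fin r → Matrix α β ℝ,
      (∀ ℓ i j, 0 ≤ R ℓ i j) ∧ (∀ ℓ, (R ℓ).rank ≤ 1) ∧ M = ∑ ℓ, R ℓ }.Nonempty := by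
  classical
  set F : α × β → Matrix α β ℝ :=
    fun p => Matrix.of fun i j => (if i = p.1 then M p.1 p.2 else 0) * (if j = p.2 then 1 else 0)
    with hF
  have e := Fintype.equivFin (α × β)
  refine ⟨Fintype.card (α × β), fun k => F (e.symm k), fun k i j => ?_, fun k => ?_, ?_⟩
  · simp only [hF, Matrix.of_apply]
    have := h0 (e.symm k).1 (e.symm k).2
    split_ifs <;> simp [this]
  · exact outer_rank_le_one _ _
  · have hsum : M = ∑ p : α × β, F p := by
      ext i j
      rw [Matrix.sum_apply]
      simp [hF, Fintype.sum_prod_type, mul_ite, ite_mul, Finset.sum_ite_eq, Finset.sum_ite_eq']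
    rw [hsum]
    exact (Equiv.sum_comp e.symm F).symm

lemma exists_nnegRank_decomp (M : Matrix α β ℝ) (h0 : ∀ i j, 0 ≤ M i j) :
    ∃ R : Fin (nnegRank M) → Matrix α β ℝ,
      (∀ ℓ i j, 0 ≤ R ℓ i j) ∧ (∀ ℓ, (R ℓ).rank ≤ 1) ∧ M = ∑ ℓ, R ℓ :=
  Nat.sInf_mem (nnegRank_set_nonempty M h0)

end Core

section Build
variable {m n p q : ℕ} (S : Matrix (Fin m) (Fin n) ℝ) (T' : Matrix (Fin p) (Fin q) ℝ)

def topIdx (p : ℕ) (i : Fin m) : Fin (m + p + 1) := ⟨i, by have := i.2; omega⟩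
def midIdx (m : ℕ) (k : Fin p) : Fin (m + p + 1) := ⟨m + k, by have := k.2; omega⟩
def lastIdx (m p : ℕ) : Fin (m + p + 1) := ⟨m + p, by omega⟩
def colS (s : Fin q) : Fin (q + 1) := ⟨s, by have := s.2; omega⟩
def colLast (q : ℕ) : Fin (q + 1) := ⟨q, by omega⟩

lemma buildA_top (i : Fin m) (j : Fin n) (s : Fin (q + 1)) :
    buildA S T' (topIdx p i) (j, s) = S i j := by
  have hi : ((topIdx p i : Fin (m + p + 1)) : ℕ) < m := i.2
  simp [buildA, topIdx, dif_pos hi]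

lemma buildA_mid_lt (k : Fin p) (j : Fin n) (s : Fin q) :
    buildA S T' (midIdx m k) (j, colS s) = T' k s := by
  have h1 : ¬ ((midIdx m k : Fin (m + p + 1)) : ℕ) < m := by simp [midIdx]
  have h2 : ((midIdx m k : Fin (m + p + 1)) : ℕ) < m + p := by
    simp [midIdx]
  have h3 : ((colS s : Fin (q + 1)) : ℕ) < q := s.2
  simp only [buildA, dif_neg h1, dif_pos h2, dif_pos h3]
  have e1 : (⟨((midIdx m k : Fin (m + p + 1)) : ℕ) - m, by simp [midIdx]⟩ : Fin p) = k := by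
    apply Fin.ext; simp [midIdx]
  have e2 : (⟨((colS s : Fin (q + 1)) : ℕ), h3⟩ : Fin q) = s := by
    apply Fin.ext; simp [colS]
  rw [e1, e2]

lemma buildA_mid_last (k : Fin p) (j : Fin n) :
    buildA S T' (midIdx m k) (j, colLast q) = 0 := by
  have h1 : ¬ ((midIdx m k : Fin (m + p + 1)) : ℕ) < m := by simp [midIdx]
  have h2 : ((midIdx m k : Fin (m + p + 1)) : ℕ) < m + p := by
    simp [midIdx]
  have h3 : ¬ ((colLast q : Fin (q + 1)) : ℕ) < q := by simp [colLast]
  simp only [buildA, dif_neg h1, dif_pos h2, dif_neg h3]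

lemma buildA_last_lt (j : Fin n) (s : Fin q) :
    buildA S T' (lastIdx m p) (j, colS s) = 0 := by
  have h1 : ¬ ((lastIdx m p : Fin (m + p + 1)) : ℕ) < m := by simp [lastIdx]
  have h2 : ¬ ((lastIdx m p : Fin (m + p + 1)) : ℕ) < m + p := by simp [lastIdx]
  have h3 : ((colS s : Fin (q + 1)) : ℕ) < q := s.2
  simp only [buildA, dif_neg h1, dif_neg h2, if_pos h3]

lemma buildA_last_last (j : Fin n) :
    buildA S T' (lastIdx m p) (j, colLast q) = 1 := by
  have h1 : ¬ ((lastIdx m p : Fin (m + p + 1)) : ℕ) < m := by simp [lastIdx]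
  have h2 : ¬ ((lastIdx m p : Fin (m + p + 1)) : ℕ) < m + p := by simp [lastIdx]
  have h3 : ¬ ((colLast q : Fin (q + 1)) : ℕ) < q := by simp [colLast]
  simp only [buildA, dif_neg h1, dif_neg h2, if_neg h3]

lemma buildA_nonneg (hS : ∀ i j, 0 ≤ S i j) (hT' : ∀ i j, 0 ≤ T' i j) :
    ∀ i c, 0 ≤ buildA S T' i c := by
  intro i c
  unfold buildA
  split_ifs <;> first | exact hS _ _ | exact hT' _ _ | norm_num

end Build

/-- With `S`, `T'`, `A` as in the setup, if every row of `S` contains a zero entry and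
`q ≥ 1` (and `n ≥ 1`, as is implicit in the setup coming from a nonempty polytope),
then `r₊(A) = r₊(S) + r₊(T') + 1`. -/
theorem nnegRank_buildA_eq {m n p q : ℕ}
    (S : Matrix (Fin m) (Fin n) ℝ) (T' : Matrix (Fin p) (Fin q) ℝ)
    (hS : ∀ i j, 0 ≤ S i j) (hT' : ∀ i j, 0 ≤ T' i j)
    (hrow : ∀ i, ∃ j, S i j = 0) (hq : 1 ≤ q) (hn : 1 ≤ n) :
    nnegRank (buildA S T') = nnegRank S + nnegRank T' + 1 := by
  classical
  set A := buildA S T' with hA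
  have hA0 : ∀ i c, 0 ≤ A i c := buildA_nonneg S T' hS hT'
  apply le_antisymm
  · -- Upper bound
    obtain ⟨P, hP0, hP1, hPsum⟩ := exists_nnegRank_decomp S hS
    obtain ⟨Q, hQ0, hQ1, hQsum⟩ := exists_nnegRank_decomp T' hT'
    choose x a hx ha hxa using fun l => exists_outer (hP0 l) (hP1 l)
    choose y b hy hb hyb using fun l => exists_outer (hQ0 l) (hQ1 l)
    set R : (Fin (nnegRank S) ⊕ (Fin (nnegRank T') ⊕ Unit)) →
        Matrix (Fin (m + p + 1)) (Fin n × Fin (q + 1)) ℝ :=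
      Sum.elim
        (fun l => Matrix.of fun i c =>
          (if h : (i : ℕ) < m then x l ⟨i, h⟩ else 0) * a l c.1)
        (Sum.elim
          (fun l => Matrix.of fun i c =>
            (if h0 : (i : ℕ) < m then 0
              else if h : (i : ℕ) < m + p then y l ⟨(i : ℕ) - m, by omega⟩ else 0) *
            (if h : (c.2 : ℕ) < q then b l ⟨c.2, h⟩ else 0))
          (fun _ => Matrix.of fun i c =>
            (if (i : ℕ) = m + p then 1 else 0) * (if (c.2 : ℕ) = q then 1 else 0)))
        with hR
    have hSsum : ∀ i' j, S i' j = ∑ l, x l i' * a l j := by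
      intro i' j
      calc S i' j = (∑ l, P l) i' j := by rw [← hPsum]
        _ = ∑ l, P l i' j := Matrix.sum_apply _ _ _ _
        _ = ∑ l, x l i' * a l j := Finset.sum_congr rfl fun l _ => hxa l i' j
    have hTsum : ∀ k s, T' k s = ∑ l, y l k * b l s := by
      intro k s
      calc T' k s = (∑ l, Q l) k s := by rw [← hQsum]
        _ = ∑ l, Q l k s := Matrix.sum_apply _ _ _ _
        _ = ∑ l, y l k * b l s := Finset.sum_congr rfl fun l _ => hyb l k s
    have hcard : (Finset.univ :
        Finset (Fin (nnegRank S) ⊕ (Fin (nnegRank T') ⊕ Unit))).card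
        = nnegRank S + nnegRank T' + 1 := by
      simp [Finset.card_univ]; omega
    rw [← hcard]
    apply nnegRank_le_card Finset.univ R
    · rintro (l | l | l) - i c <;>
        simp only [hR, Sum.elim_inl, Sum.elim_inr, Matrix.of_apply]
      · have := hx l
        split_ifs <;> [exact mul_nonneg (this _) (ha l c.1); simp]
      · have h1 := hy l
        have h2 := hb l
        split_ifs <;> first | exact mul_nonneg (h1 _) (h2 _) | simp
      · split_ifs <;> norm_num
    · rintro (l | l | l) - <;>
        · simp only [hR, Sum.elim_inl, Sum.elim_inr]
          exact outer_rank_le_one _ _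
    · ext i c
      rw [Matrix.sum_apply, Fintype.sum_sum_type, Fintype.sum_sum_type]
      obtain ⟨j, s⟩ := c
      by_cases hi1 : (i : ℕ) < m
      · -- top rows
        have hav : A i (j, s) = S ⟨i, hi1⟩ j := by rw [hA]; simp [buildA, hi1]
        have hne : ¬ ((i : ℕ) = m + p) := by omega
        simp only [hR, Sum.elim_inl, Sum.elim_inr, Matrix.of_apply, dif_pos hi1, if_neg hne,
          zero_mul, Finset.sum_const_zero, add_zero, hav]
        simp [hSsum ⟨i, hi1⟩ j]
      · by_cases hi2 : (i : ℕ) < m + p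
        · -- middle rows
          have hne : ¬ ((i : ℕ) = m + p) := by omega
          simp only [hR, Sum.elim_inl, Sum.elim_inr, Matrix.of_apply, dif_neg hi1, dif_pos hi2,
            if_neg hne, zero_mul, Finset.sum_const_zero, add_zero, zero_add]
          by_cases hs : (s : ℕ) < q
          · have hav : A i (j, s) = T' ⟨(i : ℕ) - m, by omega⟩ ⟨s, hs⟩ := by
              rw [hA]; simp [buildA, hi1, hi2, hs]
            simp only [dif_pos hs, hav]
            simp [hTsum ⟨(i : ℕ) - m, by omega⟩ ⟨s, hs⟩]
          · have hav : A i (j, s) = 0 := by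
              rw [hA]; simp [buildA, hi1, hi2, hs]
            simp [hs, hav]
        · -- last row
          have heq : (i : ℕ) = m + p := by have := i.2; omega
          simp only [hR, Sum.elim_inl, Sum.elim_inr, Matrix.of_apply, dif_neg hi1, dif_neg hi2,
            if_pos heq, zero_mul, mul_zero, Finset.sum_const_zero, add_zero, zero_add, one_mul]
          by_cases hs : (s : ℕ) < q
          · have hav : A i (j, s) = 0 := by rw [hA]; simp [buildA, hi1, hi2, hs]
            have hsne : ¬ ((s : ℕ) = q) := by omega
            simp [hav, hsne]
          · have hav : A i (j, s) = 1 := by rw [hA]; simp [buildA, hi1, hi2, hs]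
            have hsq : (s : ℕ) = q := by have := s.2; omega
            simp [hav, hsq]
  · -- Lower bound
    obtain ⟨R, hR0, hR1, hRsum⟩ := exists_nnegRank_decomp A hA0
    choose u v hu hv huv using fun ℓ => exists_outer (hR0 ℓ) (hR1 ℓ)
    have hAsum : ∀ i c, A i c = ∑ ℓ, R ℓ i c := by
      intro i c
      calc A i c = (∑ ℓ, R ℓ) i c := by rw [← hRsum]
        _ = ∑ ℓ, R ℓ i c := Matrix.sum_apply _ _ _ _
    have hRA : ∀ ℓ i c, R ℓ i c ≤ A i c := by
      intro ℓ i c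
      rw [hAsum i c]
      exact Finset.single_le_sum (fun ℓ' _ => hR0 ℓ' i c) (Finset.mem_univ ℓ)
    set P2 : Fin (nnegRank A) → Prop := fun ℓ => ∃ k c, R ℓ (midIdx m k) c ≠ 0 with hP2def
    set P3 : Fin (nnegRank A) → Prop := fun ℓ => ∃ c, R ℓ (lastIdx m p) c ≠ 0 with hP3def
    have hDT : ∀ (j : Fin n) (E : Finset (Fin (nnegRank A))),
        (∀ ℓ, ℓ ∉ E → ∀ k s, R ℓ (midIdx m k) (j, colS s) = 0) →
        nnegRank T' ≤ E.card := by
      intro j E hE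
      apply nnegRank_le_card E (fun ℓ => Matrix.of fun k s => R ℓ (midIdx m k) (j, colS s))
      · intro ℓ _ k s; exact hR0 ℓ _ _
      · intro ℓ _
        have heq : (Matrix.of fun k s => R ℓ (midIdx m k) (j, colS s))
            = Matrix.of fun k s => u ℓ (midIdx m k) * v ℓ (j, colS s) := by
          ext k s; simp only [Matrix.of_apply]; exact huv ℓ _ _
        rw [heq]; exact outer_rank_le_one _ _
      · ext k s
        rw [Matrix.sum_apply]
        have h1 : T' k s = A (midIdx m k) (j, colS s) := (buildA_mid_lt S T' k j s).symm
        rw [h1, hAsum]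
        exact (Finset.sum_subset (Finset.subset_univ E)
          (fun ℓ _ hℓ => hE ℓ hℓ k s)).symm
    have hDS : ∀ (c2 : Fin (q + 1)) (E : Finset (Fin (nnegRank A))),
        (∀ ℓ, ℓ ∉ E → ∀ (i : Fin m) (j : Fin n), R ℓ (topIdx p i) (j, c2) = 0) →
        nnegRank S ≤ E.card := by
      intro c2 E hE
      apply nnegRank_le_card E (fun ℓ => Matrix.of fun i j => R ℓ (topIdx p i) (j, c2))
      · intro ℓ _ i j; exact hR0 ℓ _ _
      · intro ℓ _
        have heq : (Matrix.of fun i j => R ℓ (topIdx p i) (j, c2))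
            = Matrix.of fun i j => u ℓ (topIdx p i) * v ℓ (j, c2) := by
          ext i j; simp only [Matrix.of_apply]; exact huv ℓ _ _
        rw [heq]; exact outer_rank_le_one _ _
      · ext i j
        rw [Matrix.sum_apply]
        have h1 : S i j = A (topIdx p i) (j, c2) := (buildA_top S T' i j c2).symm
        rw [h1, hAsum]
        exact (Finset.sum_subset (Finset.subset_univ E)
          (fun ℓ _ hℓ => hE ℓ hℓ i j)).symm
    have hP2v : ∀ ℓ, P2 ℓ → ∀ j : Fin n, v ℓ (j, colLast q) = 0 := by
      intro ℓ hp2 j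
      simp only [hP2def] at hp2
      obtain ⟨k, c, hc⟩ := hp2
      rw [huv] at hc
      have hun : u ℓ (midIdx m k) ≠ 0 := left_ne_zero_of_mul hc
      have hle : u ℓ (midIdx m k) * v ℓ (j, colLast q) ≤ 0 := by
        have h := hRA ℓ (midIdx m k) (j, colLast q)
        rw [huv, hA, buildA_mid_last] at h
        exact h
      have hge : 0 ≤ u ℓ (midIdx m k) * v ℓ (j, colLast q) :=
        mul_nonneg (hu ℓ _) (hv ℓ _)
      exact (mul_eq_zero.mp (le_antisymm hle hge)).resolve_left hun
    have hP3v : ∀ ℓ, P3 ℓ → ∀ (j : Fin n) (s : Fin q), v ℓ (j, colS s) = 0 := by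
      intro ℓ hp3 j s
      simp only [hP3def] at hp3
      obtain ⟨c, hc⟩ := hp3
      rw [huv] at hc
      have hun : u ℓ (lastIdx m p) ≠ 0 := left_ne_zero_of_mul hc
      have hle : u ℓ (lastIdx m p) * v ℓ (j, colS s) ≤ 0 := by
        have h := hRA ℓ (lastIdx m p) (j, colS s)
        rw [huv, hA, buildA_last_lt] at h
        exact h
      have hge : 0 ≤ u ℓ (lastIdx m p) * v ℓ (j, colS s) :=
        mul_nonneg (hu ℓ _) (hv ℓ _)
      exact (mul_eq_zero.mp (le_antisymm hle hge)).resolve_left hun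
    have hex3 : ∃ ℓ, P3 ℓ ∧ ¬ P2 ℓ := by
      have hone : (1 : ℝ) = ∑ ℓ, R ℓ (lastIdx m p) (⟨0, hn⟩, colLast q) := by
        rw [← hAsum, hA]
        exact (buildA_last_last S T' _).symm
      by_contra hno
      push_neg at hno
      have hz : ∀ ℓ, R ℓ (lastIdx m p) (⟨0, hn⟩, colLast q) = 0 := by
        intro ℓ
        by_cases hp3 : P3 ℓ
        · have hp2 := hno ℓ hp3
          rw [huv, hP2v ℓ hp2 ⟨0, hn⟩, mul_zero]
        · simp only [hP3def, not_exists, not_not] at hp3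
          exact hp3 (⟨0, hn⟩, colLast q)
      rw [Finset.sum_eq_zero (fun ℓ _ => hz ℓ)] at hone
      norm_num at hone
    have hb : nnegRank T' ≤ (Finset.univ.filter P2).card := by
      apply hDT ⟨0, hn⟩
      intro ℓ hℓ k s
      have hnp2 : ¬ P2 ℓ := by simpa using hℓ
      simp only [hP2def, not_exists, not_not] at hnp2
      exact hnp2 k (⟨0, hn⟩, colS s)
    by_cases hcase : nnegRank T' < (Finset.univ.filter P2).card
    · have hs : nnegRank S ≤ (Finset.univ.filter (fun ℓ => ¬ P2 ℓ)).card := by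
        apply hDS (colLast q)
        intro ℓ hℓ i j
        have hp2 : P2 ℓ := by simpa using hℓ
        rw [huv, hP2v ℓ hp2 j, mul_zero]
      have hsplit := Finset.card_filter_add_card_filter_not
        (s := (Finset.univ : Finset (Fin (nnegRank A)))) (p := P2)
      have hcardr : (Finset.univ : Finset (Fin (nnegRank A))).card = nnegRank A := by simp
      omega
    · have hbe : (Finset.univ.filter P2).card = nnegRank T' := le_antisymm (by omega) hb
      have hpure : ∀ ℓ, P2 ℓ → ∀ (i : Fin m) (c : Fin n × Fin (q + 1)),
          R ℓ (topIdx p i) c = 0 := by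
        by_contra hcon
        push_neg at hcon
        obtain ⟨ℓ, hp2, i, c, hne⟩ := hcon
        rw [huv] at hne
        have hun : u ℓ (topIdx p i) ≠ 0 := left_ne_zero_of_mul hne
        obtain ⟨j1, hj1⟩ := hrow i
        have hv0 : ∀ s : Fin (q + 1), v ℓ (j1, s) = 0 := by
          intro s
          have hle := hRA ℓ (topIdx p i) (j1, s)
          rw [huv, hA, buildA_top, hj1] at hle
          have hge : 0 ≤ u ℓ (topIdx p i) * v ℓ (j1, s) := mul_nonneg (hu _ _) (hv _ _)
          exact (mul_eq_zero.mp (le_antisymm hle hge)).resolve_left hun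
        have hmem : ℓ ∈ Finset.univ.filter P2 := by simp [hp2]
        have hcard := Finset.card_erase_of_mem hmem
        have hDT1 : nnegRank T' ≤ ((Finset.univ.filter P2).erase ℓ).card := by
          apply hDT j1
          intro ℓ' hℓ' k s
          by_cases heq : ℓ' = ℓ
          · subst heq; rw [huv, hv0, mul_zero]
          · have hnm : ℓ' ∉ Finset.univ.filter P2 :=
              fun hmem' => hℓ' (Finset.mem_erase.mpr ⟨heq, hmem'⟩)
            have hnp2 : ¬ P2 ℓ' := by simpa using hnm
            simp only [hP2def, not_exists, not_not] at hnp2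
            exact hnp2 k (j1, colS s)
        have hposc : 0 < (Finset.univ.filter P2).card := Finset.card_pos.mpr ⟨ℓ, hmem⟩
        omega
      have hs : nnegRank S ≤
          (Finset.univ.filter (fun ℓ => ¬ P2 ℓ ∧ ¬ P3 ℓ)).card := by
        apply hDS (colS ⟨0, hq⟩)
        intro ℓ hℓ i j
        have hnand : ¬ (¬ P2 ℓ ∧ ¬ P3 ℓ) := by simpa using hℓ
        by_cases hp2 : P2 ℓ
        · exact hpure ℓ hp2 i _
        · have hp3 : P3 ℓ := by tauto
          rw [huv, hP3v ℓ hp3 j ⟨0, hq⟩, mul_zero]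
      obtain ⟨ℓ3, hp3, hnp2⟩ := hex3
      have h1 : 1 ≤ (Finset.univ.filter (fun ℓ => ¬ P2 ℓ ∧ P3 ℓ)).card :=
        Finset.card_pos.mpr ⟨ℓ3, by simp [hnp2, hp3]⟩
      have hsplit1 := Finset.card_filter_add_card_filter_not
        (s := (Finset.univ : Finset (Fin (nnegRank A)))) (p := P2)
      have hsplit2 := Finset.card_filter_add_card_filter_not
        (s := Finset.univ.filter (fun ℓ => ¬ P2 ℓ)) (p := P3)
      rw [Finset.filter_filter, Finset.filter_filter] at hsplit2
      have hcardr : (Finset.univ : Finset (Fin (nnegRank A))).card = nnegRank A := by simp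
      omega
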